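/- arXiv:1508.03858 — 4 statements merged into one kernel-verified Lean document; each statement's English description precedes it below -/
import Mathlib

section
/- Let r ≥ 2, σ ∈ Σ_r, M = M(σ), let x, y ∈ Int(M), and let m ≥ 1. If (P₁,…,P_m) ∈ (∂M)^m maximizes the total length |xP₁| + |P₁P₂| + ⋯ + |P_{m−1}P_m| + |P_m y| over all m-tuples of points of ∂M, then all consecutive points of the polygonal path x P₁ ⋯ P_m y are distinct and the path x P₁ ⋯ P_m y is a billiard path from x to y in M (i.e., the reflection law holds at each P_i). -/
noncomputable section

open Set

/-- Points of the plane. -/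
abbrev Pt : Type := EuclideanSpace ℝ (Fin 2)

/-- Rotation of a plane vector by +90 degrees (counterclockwise). -/
def rot90 (w : Pt) : Pt := (WithLp.equiv 2 (Fin 2 → ℝ)).symm ![-(w 1), w 0]

/-- A simple closed `C^r` curve in the plane with positive curvature, parametrized at
constant speed by `S¹ = ℝ/ℤ`, oriented counterclockwise.  Positive curvature together with
counterclockwise orientation is encoded by positivity of the cross product `σ' × σ''`. -/
structure ClosedCurve (r : ℕ) where
  toFun : ℝ → Pt
  contDiff : ContDiff ℝ r toFun
  periodic : Function.Periodic toFun 1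
  inj : ∀ ⦃s t : ℝ⦄, s ∈ Ico (0:ℝ) 1 → t ∈ Ico (0:ℝ) 1 → toFun s = toFun t → s = t
  constSpeed : ∃ c : ℝ, 0 < c ∧ ∀ s : ℝ, ‖deriv toFun s‖ = c
  posCurv : ∀ s : ℝ, 0 < deriv toFun s 0 * deriv (deriv toFun) s 1
      - deriv toFun s 1 * deriv (deriv toFun) s 0

namespace ClosedCurve

variable {r : ℕ}

/-- The boundary `∂M(σ)` of the billiard table: the image of the curve. -/
def boundary (σ : ClosedCurve r) : Set Pt := Set.range σ.toFun

/-- The billiard table `M(σ)`: the compact convex region bounded by `σ`. -/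
def table (σ : ClosedCurve r) : Set Pt := convexHull ℝ σ.boundary

/-- Unit tangent vector at parameter `s`. -/
def unitTangent (σ : ClosedCurve r) (s : ℝ) : Pt := ‖deriv σ.toFun s‖⁻¹ • deriv σ.toFun s

/-- Inward unit normal at parameter `s` (for a counterclockwise curve). -/
def inwardNormal (σ : ClosedCurve r) (s : ℝ) : Pt := rot90 (σ.unitTangent s)

/-- Curvature at parameter `s`. -/
def curvatureAt (σ : ClosedCurve r) (s : ℝ) : ℝ :=
  (deriv σ.toFun s 0 * deriv (deriv σ.toFun) s 1
    - deriv σ.toFun s 1 * deriv (deriv σ.toFun) s 0) / ‖deriv σ.toFun s‖ ^ 3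

end ClosedCurve

/-- The `C^k` distance `d_k` between two closed curves (given by constant-speed
parametrizations `f`, `g` of period 1): the infimum over basepoint shifts `c` of the
`C^k` distance on `[0,1]` between `t ↦ f (t + c)` and `g`. -/
def ckDist (k : ℕ) (f g : ℝ → Pt) : ℝ :=
  sInf {d : ℝ | ∃ c : ℝ, d = ⨆ j : Fin (k+1), ⨆ s : Icc (0:ℝ) 1,
    ‖iteratedDeriv (j : ℕ) (fun t => f (t + c)) (s : ℝ) - iteratedDeriv (j : ℕ) g (s : ℝ)‖}

/-- Unit vector pointing from `p` to `q`. -/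
def unitDir (p q : Pt) : Pt := ‖q - p‖⁻¹ • (q - p)

/-- Reflection of the vector `w` across the line spanned by `T`. -/
def reflectAcross (T w : Pt) : Pt := (2 * (inner ℝ w T : ℝ) / (inner ℝ T T : ℝ)) • T - w

/-- A billiard path from `x` to `y` in the table bounded by `σ`: a polygonal path
`x P₁ ⋯ P_m y` whose vertices lie on the boundary, whose segments lie in the table, and
which satisfies the reflection law at each vertex. -/
structure BilliardPath {r : ℕ} (σ : ClosedCurve r) (x y : Pt) where
  m : ℕ
  V : ℕ → Pt
  head_eq : V 0 = x
  last_eq : V (m + 1) = y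
  consec_ne : ∀ i ≤ m, V i ≠ V (i + 1)
  vertex_mem : ∀ i, 1 ≤ i → i ≤ m → V i ∈ σ.boundary
  seg_sub : ∀ i ≤ m, segment ℝ (V i) (V (i + 1)) ⊆ σ.table
  reflect : ∀ i, 1 ≤ i → i ≤ m → ∃ s : ℝ, σ.toFun s = V i ∧
    unitDir (V i) (V (i + 1)) = reflectAcross (deriv σ.toFun s) (unitDir (V (i - 1)) (V i))

namespace BilliardPath

variable {r : ℕ} {σ : ClosedCurve r} {x y : Pt}

/-- The `j`-th segment of a billiard path. -/
def seg (γ : BilliardPath σ x y) (j : ℕ) : Set Pt := segment ℝ (γ.V j) (γ.V (j + 1))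

/-- `p` is a vertex of the path `γ`. -/
def IsVertex (γ : BilliardPath σ x y) (p : Pt) : Prop := ∃ i, 1 ≤ i ∧ i ≤ γ.m ∧ γ.V i = p

end BilliardPath

/-- The `j`-th segment of a polygonal path with vertex sequence `V`. -/
def segOf (V : ℕ → Pt) (j : ℕ) : Set Pt := segment ℝ (V j) (V (j + 1))

/-- `n` polygonal paths from `x` to `y` (the `i`-th having `m i` interior vertices, with
vertex sequence `V i`) are in general position:
(GP1) no two paths share a vertex;
(GP2) no point occurs as a vertex on the same path more than once;
(GP3) no triple intersection points except `x` and `y`;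
(GP4) `x` and `y` are not interior points of any of the paths. -/
def GenPos (x y : Pt) {n : ℕ} (m : Fin n → ℕ) (V : Fin n → ℕ → Pt) : Prop :=
  (∀ i j : Fin n, i ≠ j → ∀ a b : ℕ, 1 ≤ a → a ≤ m i → 1 ≤ b → b ≤ m j → V i a ≠ V j b) ∧
  (∀ i : Fin n, ∀ a b : ℕ, 1 ≤ a → a ≤ m i → 1 ≤ b → b ≤ m i → V i a = V i b → a = b) ∧
  (¬ ∃ z : Pt, z ≠ x ∧ z ≠ y ∧ ∃ i₁ i₂ i₃ : Fin n, ∃ j₁ j₂ j₃ : ℕ,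
    j₁ ≤ m i₁ ∧ j₂ ≤ m i₂ ∧ j₃ ≤ m i₃ ∧
    segOf (V i₁) j₁ ≠ segOf (V i₂) j₂ ∧ segOf (V i₁) j₁ ≠ segOf (V i₃) j₃ ∧
    segOf (V i₂) j₂ ≠ segOf (V i₃) j₃ ∧
    z ∈ segOf (V i₁) j₁ ∧ z ∈ segOf (V i₂) j₂ ∧ z ∈ segOf (V i₃) j₃) ∧
  (∀ i : Fin n, ∀ j ≤ m i, (x ∈ segOf (V i) j → j = 0) ∧ (y ∈ segOf (V i) j → j = m i))

/-- The non-collinearity condition (NC): no two distinct vertices are collinear with `y`. -/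
def NonCollinearCond (y : Pt) {n : ℕ} (m : Fin n → ℕ) (V : Fin n → ℕ → Pt) : Prop :=
  ∀ (i₁ i₂ : Fin n) (j₁ j₂ : ℕ), 1 ≤ j₁ → j₁ ≤ m i₁ → 1 ≤ j₂ → j₂ ≤ m i₂ →
    V i₁ j₁ ≠ V i₂ j₂ → ¬ Collinear ℝ ({V i₁ j₁, V i₂ j₂, y} : Set Pt)

/-- `n` billiard paths are in general position. -/
def InGenPos {r n : ℕ} {σ : ClosedCurve r} {x y : Pt}
    (γ : Fin n → BilliardPath σ x y) : Prop :=
  GenPos x y (fun i => (γ i).m) (fun i => (γ i).V)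

/-- Distance between two polygonal paths with `m` interior vertices each. -/
def polyDist (m : ℕ) (V W : ℕ → Pt) : ℝ := ⨆ i : Fin (m + 2), dist (V (i : ℕ)) (W (i : ℕ))

/-- The pair `(x, y)` is secure in the table bounded by `σ`: some finite subset of
`M(σ) \ {x, y}` meets every billiard path from `x` to `y`. -/
def SecurePair {r : ℕ} (σ : ClosedCurve r) (x y : Pt) : Prop :=
  ∃ B : Finset Pt, (↑B : Set Pt) ⊆ σ.table \ {x, y} ∧
    ∀ γ : BilliardPath σ x y, ∃ p ∈ B, ∃ j ≤ γ.m, p ∈ γ.seg j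

/-- A `C^k` family of oriented lines `u ↦ {base u + t • dir u}`, `u ∈ [a, b]`. -/
structure LineFamily (k : ℕ) where
  a : ℝ
  b : ℝ
  lt : a < b
  base : ℝ → Pt
  dir : ℝ → Pt
  smooth_base : ContDiff ℝ k base
  smooth_dir : ContDiff ℝ k dir
  unit_dir : ∀ u : ℝ, ‖dir u‖ = 1

namespace LineFamily

variable {k : ℕ}

/-- The parameter interval of the family. -/
def I (F : LineFamily k) : Set ℝ := Icc F.a F.b

/-- Non-degeneracy: if `dir' u = 0` then `base' u` is not a scalar multiple of `dir u`. -/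
def Nondegenerate (F : LineFamily k) : Prop :=
  ∀ u ∈ F.I, deriv F.dir u = 0 → ∀ c : ℝ, deriv F.base u ≠ c • F.dir u

/-- The family focuses (in linear approximation) at the point `p` at parameter `u₀`. -/
def FocusesAt (F : LineFamily k) (u₀ : ℝ) (p : Pt) : Prop :=
  deriv F.dir u₀ ≠ 0 ∧
  p = F.base u₀ + (-((inner ℝ (deriv F.base u₀) (deriv F.dir u₀) : ℝ) /
    (inner ℝ (deriv F.dir u₀) (deriv F.dir u₀) : ℝ))) • F.dir u₀

end LineFamily

/-- `G` is the family of oriented lines obtained by reflecting the family `F` from the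
curve `σ`: the base point of `G` is the last boundary point hit along each line of `F`,
and the direction is reflected there. -/
def IsReflectionOf {r k : ℕ} (σ : ClosedCurve r) (F G : LineFamily k) : Prop :=
  G.a = F.a ∧ G.b = F.b ∧
  ∀ u ∈ F.I, ∃ t : ℝ,
    G.base u = F.base u + t • F.dir u ∧
    G.base u ∈ σ.boundary ∧
    (∀ t' : ℝ, F.base u + t' • F.dir u ∈ σ.boundary → t' ≤ t) ∧
    ∃ s : ℝ, σ.toFun s = G.base u ∧
      G.dir u = F.dir u - (2 * (inner ℝ (σ.inwardNormal s) (F.dir u) : ℝ)) • σ.inwardNormal s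

/-- The endpoints of the billiard path `τ` (from `p` to `q`, with `τ.m` reflections)
are conjugate along `τ` in the table bounded by `σ`. -/
def ConjugateAlong {r : ℕ} (σ : ClosedCurve r) {p q : Pt} (τ : BilliardPath σ p q) : Prop :=
  ∃ (F : ℕ → LineFamily 1) (u₀ : ℝ),
    u₀ ∈ (F 0).I ∧ (F 0).Nondegenerate ∧
    (F 0).dir u₀ = unitDir p (τ.V 1) ∧
    (∃ t : ℝ, (F 0).base u₀ = p + t • unitDir p (τ.V 1)) ∧
    (∀ i < τ.m, IsReflectionOf σ (F i) (F (i + 1))) ∧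
    (F 0).FocusesAt u₀ p ∧ (F τ.m).FocusesAt u₀ q

/-- The `C^k` distance `d_k` between two parametrized families of lines on `[a,b]`. -/
def famCkDist (k : ℕ) (a b : ℝ) (f g f' g' : ℝ → Pt) : ℝ :=
  max (⨆ j : Fin (k+1), ⨆ s : Icc a b,
        ‖iteratedDeriv (j : ℕ) f (s : ℝ) - iteratedDeriv (j : ℕ) f' (s : ℝ)‖)
      (⨆ j : Fin (k+1), ⨆ s : Icc a b,
        ‖iteratedDeriv (j : ℕ) g (s : ℝ) - iteratedDeriv (j : ℕ) g' (s : ℝ)‖)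

/-- `U` is an open subset of `S` in the `C^k` topology induced by the metric `d_k`. -/
def OpenIn {r : ℕ} (k : ℕ) (S U : Set (ClosedCurve r)) : Prop :=
  U ⊆ S ∧ ∀ σ ∈ U, ∃ ε > 0, ∀ τ ∈ S, ckDist k σ.toFun τ.toFun < ε → τ ∈ U

/-- `U` is a dense subset of `S` in the `C^k` topology induced by the metric `d_k`. -/
def DenseIn {r : ℕ} (k : ℕ) (S U : Set (ClosedCurve r)) : Prop :=
  ∀ σ ∈ S, ∀ ε > 0, ∃ τ ∈ U, ckDist k σ.toFun τ.toFun < ε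

/-- `A` is a dense `G_δ` subset of `S` in the `C^k` topology: a dense countable
intersection of open dense subsets of `S`. -/
def DenseGdeltaIn {r : ℕ} (k : ℕ) (S A : Set (ClosedCurve r)) : Prop :=
  (∃ U : ℕ → Set (ClosedCurve r), (∀ i, OpenIn k S (U i) ∧ DenseIn k S (U i)) ∧
    A = ⋂ i, U i) ∧ DenseIn k S A

/-- `C¹` distance between maps on a compact set `K ⊆ ℝ²`. -/
def c1DistOn (K : Set Pt) (f g : Pt → Pt) : ℝ :=
  max (⨆ s : K, ‖f (s : Pt) - g (s : Pt)‖)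
      (⨆ s : K, ‖fderivWithin ℝ f K (s : Pt) - fderivWithin ℝ g K (s : Pt)‖)

/-!
Fixing all vertices but `P j`, the point `P j` maximizes `z ↦ |P (j-1) z| + |z P (j+1)|` over
`∂M`. Since `M` has interior points, `∂M` does not lie in the segment `[P (j-1), P (j+1)]`, so
this maximum strictly exceeds `|P (j-1) P (j+1)|`; in particular no two consecutive vertices
coincide. Differentiating along `σ`, the incoming and outgoing unit directions at `P j` have the
same tangential component. Two unit vectors in the plane with the same component along `T` are
equal or mirror images across `T`, and equality would put `P j` on the segment.
-/

open scoped RealInnerProductSpace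

section PlaneGeometry

variable {V : Type*} [NormedAddCommGroup V] [InnerProductSpace ℝ V]

theorem eq_zero_or_eq_zero_of_pairwise_inner_eq_zero (hV : Module.finrank ℝ V = 2)
    {a b w : V} (hw : w ≠ 0) (haw : ⟪a, w⟫ = 0) (hbw : ⟪b, w⟫ = 0) (hab : ⟪a, b⟫ = 0) :
    a = 0 ∨ b = 0 := by
  by_contra! h
  have hind : LinearIndependent ℝ ![a, b, w] := by
    refine linearIndependent_of_ne_zero_of_inner_eq_zero ?_ ?_
    · intro i; fin_cases i <;> simp [h.1, h.2, hw]
    · intro i j hij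
      fin_cases i <;> fin_cases j <;> simp_all [real_inner_comm]
  have : FiniteDimensional ℝ V := Module.finite_of_finrank_pos (by omega)
  have := hind.fintype_card_le_finrank
  simp [hV] at this

theorem affineSpan_pair_ne_top [FiniteDimensional ℝ V] (hV : 2 ≤ Module.finrank ℝ V) (A B : V) :
    line[ℝ, A, B] ≠ ⊤ := by
  intro h
  have hrank := (collinear_pair ℝ A B).finrank_le_one
  rw [← direction_affineSpan, h, AffineSubspace.direction_top, finrank_top] at hrank
  omega

theorem not_subset_segment_of_interior_convexHull_nonempty [FiniteDimensional ℝ V]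
    (hV : 2 ≤ Module.finrank ℝ V) {s : Set V} (hs : (interior (convexHull ℝ s)).Nonempty)
    (A B : V) : ¬ s ⊆ segment ℝ A B := by
  intro hsub
  rw [interior_convexHull_nonempty_iff_affineSpan_eq_top] at hs
  refine affineSpan_pair_ne_top hV A B (top_unique (hs ▸ affineSpan_le.mpr fun z hz => ?_))
  exact (mem_segment_iff_wbtw.mp (hsub hz)).mem_affineSpan

end PlaneGeometry

theorem inner_reflectAcross_self {T : Pt} (hT : T ≠ 0) (w : Pt) :
    ⟪reflectAcross T w, T⟫ = ⟪w, T⟫ := by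
  rw [reflectAcross, inner_sub_left, real_inner_smul_left,
    div_mul_cancel₀ _ (inner_self_ne_zero.mpr hT)]
  ring

/-- In the plane, `v - u` and `v - reflectAcross T u` are both orthogonal to `T` and to each
other, so one of them vanishes. -/
theorem eq_or_eq_reflectAcross_of_inner_eq {T u v : Pt} (hT : T ≠ 0) (hinner : ⟪u, T⟫ = ⟪v, T⟫)
    (hnorm : ‖u‖ = ‖v‖) : v = u ∨ v = reflectAcross T u := by
  have hvu : ⟪v - u, T⟫ = 0 := by rw [inner_sub_left, hinner, sub_self]
  have hvRu : ⟪v - reflectAcross T u, T⟫ = 0 := by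
    rw [inner_sub_left, inner_reflectAcross_self hT, hinner, sub_self]
  have horth : ⟪v - u, v - reflectAcross T u⟫ = 0 := by
    have hsq : ⟪v - u, v + u⟫ = 0 := by
      rw [real_inner_comm, real_inner_add_sub_eq_zero_iff, hnorm]
    rw [reflectAcross,
      show v - ((2 * ⟪u, T⟫ / ⟪T, T⟫) • T - u) = (v + u) - (2 * ⟪u, T⟫ / ⟪T, T⟫) • T by abel,
      inner_sub_right, real_inner_smul_right, hsq, hvu, mul_zero, sub_zero]
  exact (eq_zero_or_eq_zero_of_pairwise_inner_eq_zero finrank_euclideanSpace_fin hT hvu hvRu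
    horth).imp sub_eq_zero.mp sub_eq_zero.mp

theorem unitDir_swap (p q : Pt) : unitDir q p = -unitDir p q := by
  rw [unitDir, unitDir, ← neg_sub q p, norm_neg, smul_neg]

theorem norm_unitDir {p q : Pt} (h : p ≠ q) : ‖unitDir p q‖ = 1 :=
  norm_smul_inv_norm (sub_ne_zero.mpr h.symm)

theorem dist_add_dist_eq_of_unitDir_eq {A P B : Pt} (h : unitDir A P = unitDir P B) :
    dist A P + dist P B = dist A B := by
  have hray : SameRay ℝ (P - A) (B - P) := sameRay_iff_inv_norm_smul_eq.mpr (.inr (.inr h))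
  rw [dist_eq_norm', dist_eq_norm', dist_eq_norm', ← hray.norm_add, sub_add_sub_cancel']

theorem HasDerivAt.dist_left {f : ℝ → Pt} {f' : Pt} {s : ℝ} (A : Pt) (hf : HasDerivAt f f' s)
    (hA : f s ≠ A) : HasDerivAt (fun t => dist A (f t)) ⟪unitDir A (f s), f'⟫ s := by
  have hpos : ‖f s - A‖ ≠ 0 := norm_ne_zero_iff.mpr (sub_ne_zero.mpr hA)
  have h := (hf.sub_const A).norm_sq.sqrt (pow_ne_zero 2 hpos)
  simp only [Real.sqrt_sq (norm_nonneg _)] at h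
  convert h using 1
  · funext t; exact dist_eq_norm' A (f t)
  · rw [unitDir, real_inner_smul_left]; field_simp

theorem unitDir_eq_reflectAcross_of_isLocalMax {f : ℝ → Pt} {T : Pt} {s : ℝ} {A B : Pt}
    (hf : HasDerivAt f T s) (hT : T ≠ 0)
    (hmax : IsLocalMax (fun t => dist A (f t) + dist (f t) B) s)
    (hAB : dist A B < dist A (f s) + dist (f s) B) :
    unitDir (f s) B = reflectAcross T (unitDir A (f s)) := by
  have hA : f s ≠ A := by rintro h; simp [h] at hAB
  have hB : f s ≠ B := by rintro h; simp [h] at hAB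
  have hderiv : HasDerivAt (fun t => dist A (f t) + dist (f t) B)
      (⟪unitDir A (f s), T⟫ - ⟪unitDir (f s) B, T⟫) s := by
    simp only [dist_comm _ B]
    rw [sub_eq_add_neg, ← inner_neg_left, ← unitDir_swap]
    exact (hf.dist_left A hA).add (hf.dist_left B hB)
  have hinner := sub_eq_zero.mp (hmax.hasDerivAt_eq_zero hderiv)
  have hnorm : ‖unitDir A (f s)‖ = ‖unitDir (f s) B‖ := by
    rw [norm_unitDir hA.symm, norm_unitDir hB]
  rcases eq_or_eq_reflectAcross_of_inner_eq hT hinner hnorm with h | h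
  · exact absurd (dist_add_dist_eq_of_unitDir_eq h.symm) hAB.ne'
  · exact h

section Polygons

variable {α : Type*} [PseudoMetricSpace α]

theorem sum_dist_update_add (P : ℕ → α) {m j : ℕ} (hj1 : 1 ≤ j) (hjm : j ≤ m) (z : α) :
    ∑ i ∈ Finset.range (m + 1), dist (Function.update P j z i) (Function.update P j z (i + 1)) +
        (dist (P (j - 1)) (P j) + dist (P j) (P (j + 1))) =
      ∑ i ∈ Finset.range (m + 1), dist (P i) (P (i + 1)) +
        (dist (P (j - 1)) z + dist z (P (j + 1))) := by
  set Q := Function.update P j z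
  have hQ : ∀ i ≠ j, Q i = P i := fun i hi => Function.update_of_ne hi _ _
  have hdiff : ∑ i ∈ Finset.range (m + 1), (dist (Q i) (Q (i + 1)) - dist (P i) (P (i + 1))) =
      (dist (Q (j - 1)) (Q (j - 1 + 1)) - dist (P (j - 1)) (P (j - 1 + 1))) +
        (dist (Q j) (Q (j + 1)) - dist (P j) (P (j + 1))) := by
    refine Finset.sum_eq_add_of_mem (j - 1) j (Finset.mem_range.mpr (by omega : j - 1 < m + 1))
      (Finset.mem_range.mpr (by omega : j < m + 1)) (by omega) ?_
    intro i _ ⟨hi₁, hi₂⟩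
    rw [hQ i hi₂, hQ (i + 1) (by omega), sub_self]
  rw [Finset.sum_sub_distrib, Nat.sub_add_cancel hj1, hQ (j - 1) (by omega), hQ (j + 1) (by omega),
    show Q j = z from Function.update_self _ _ _] at hdiff
  linarith

theorem isMaxOn_dist_add_dist_of_sum_le {S : Set α} {x y : α} {m : ℕ} {P : ℕ → α}
    (hP0 : P 0 = x) (hPm : P (m + 1) = y) (hPS : ∀ i, 1 ≤ i → i ≤ m → P i ∈ S)
    (hmax : ∀ Q : ℕ → α, Q 0 = x → Q (m + 1) = y → (∀ i, 1 ≤ i → i ≤ m → Q i ∈ S) →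
      ∑ i ∈ Finset.range (m + 1), dist (Q i) (Q (i + 1)) ≤
        ∑ i ∈ Finset.range (m + 1), dist (P i) (P (i + 1)))
    {j : ℕ} (hj1 : 1 ≤ j) (hjm : j ≤ m) :
    IsMaxOn (fun z => dist (P (j - 1)) z + dist z (P (j + 1))) S (P j) := by
  refine isMaxOn_iff.mpr fun z hz => ?_
  have hQS : ∀ i, 1 ≤ i → i ≤ m → Function.update P j z i ∈ S := by
    intro i hi1 him
    rcases eq_or_ne i j with rfl | hij
    · rwa [Function.update_self]
    · rw [Function.update_of_ne hij]; exact hPS i hi1 him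
  have hle := hmax _ (by rwa [Function.update_of_ne (by omega)])
    (by rwa [Function.update_of_ne (by omega)]) hQS
  linarith [sum_dist_update_add P hj1 hjm z]

theorem ne_succ_of_dist_lt_dist_add_dist {m : ℕ} (hm : 1 ≤ m) {P : ℕ → α}
    (h : ∀ j, 1 ≤ j → j ≤ m →
      dist (P (j - 1)) (P (j + 1)) < dist (P (j - 1)) (P j) + dist (P j) (P (j + 1)))
    {i : ℕ} (hi : i ≤ m) : P i ≠ P (i + 1) := by
  intro heq
  rcases i with _ | i
  · simpa [heq] using h 1 le_rfl hm
  · simpa [heq] using h (i + 1) (by omega) hi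

end Polygons

theorem dist_lt_dist_add_dist_of_isMaxOn {V : Type*} [NormedAddCommGroup V] [NormedSpace ℝ V]
    [StrictConvexSpace ℝ V] {S : Set V} {A B p : V}
    (hmax : IsMaxOn (fun z => dist A z + dist z B) S p) (hS : ¬ S ⊆ segment ℝ A B) :
    dist A B < dist A p + dist p B := by
  obtain ⟨z, hzS, hz⟩ := Set.not_subset.mp hS
  have hlt : dist A B < dist A z + dist z B := (dist_triangle A z B).lt_of_ne fun h =>
    hz (mem_segment_iff_wbtw.mpr (dist_add_dist_eq_iff.mp h.symm))
  exact hlt.trans_le (hmax hzS)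

namespace ClosedCurve

variable {r : ℕ}

theorem differentiable (σ : ClosedCurve r) (hr : 1 ≤ r) : Differentiable ℝ σ.toFun :=
  σ.contDiff.differentiable (by exact_mod_cast (by omega : r ≠ 0))

theorem deriv_ne_zero (σ : ClosedCurve r) (s : ℝ) : deriv σ.toFun s ≠ 0 := by
  obtain ⟨c, hc, hspeed⟩ := σ.constSpeed
  exact norm_pos_iff.mp (hspeed s ▸ hc)

theorem convex_table (σ : ClosedCurve r) : Convex ℝ σ.table := convex_convexHull ℝ _

theorem boundary_subset_table (σ : ClosedCurve r) : σ.boundary ⊆ σ.table :=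
  subset_convexHull ℝ _

theorem boundary_not_subset_segment (σ : ClosedCurve r) (h : (interior σ.table).Nonempty)
    (A B : Pt) : ¬ σ.boundary ⊆ segment ℝ A B :=
  not_subset_segment_of_interior_convexHull_nonempty (by simp) h A B

end ClosedCurve

/-- maximal length polygonal paths are billiard paths. If
`(P₁, …, P_m) ∈ (∂M)^m` maximizes the total length of the polygonal path `x P₁ ⋯ P_m y`
over all `m`-tuples of boundary points, then all consecutive points are distinct and the
path is a billiard path from `x` to `y`. -/
theorem maximal_length_is_billiard
    (r : ℕ) (hr : 2 ≤ r) (σ : ClosedCurve r) (x y : Pt)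
    (hx : x ∈ interior σ.table) (hy : y ∈ interior σ.table)
    (m : ℕ) (hm : 1 ≤ m) (P : ℕ → Pt)
    (hP0 : P 0 = x) (hPm : P (m + 1) = y)
    (hPbd : ∀ i, 1 ≤ i → i ≤ m → P i ∈ σ.boundary)
    (hmax : ∀ Q : ℕ → Pt, Q 0 = x → Q (m + 1) = y → (∀ i, 1 ≤ i → i ≤ m → Q i ∈ σ.boundary) →
      ∑ i ∈ Finset.range (m + 1), dist (Q i) (Q (i + 1)) ≤
        ∑ i ∈ Finset.range (m + 1), dist (P i) (P (i + 1))) :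
    (∀ i ≤ m, P i ≠ P (i + 1)) ∧
    ∃ γ : BilliardPath σ x y, γ.m = m ∧ ∀ i ≤ m + 1, γ.V i = P i := by
  have hvertex := fun j (hj1 : 1 ≤ j) (hjm : j ≤ m) =>
    isMaxOn_dist_add_dist_of_sum_le hP0 hPm hPbd hmax hj1 hjm
  have hstrict := fun j (hj1 : 1 ≤ j) (hjm : j ≤ m) => dist_lt_dist_add_dist_of_isMaxOn
    (hvertex j hj1 hjm) (σ.boundary_not_subset_segment ⟨x, hx⟩ _ _)
  have hne := fun i (hi : i ≤ m) => ne_succ_of_dist_lt_dist_add_dist hm hstrict hi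
  have htable : ∀ i ≤ m + 1, P i ∈ σ.table := by
    intro i hi
    rcases Nat.eq_zero_or_pos i with rfl | hi0
    · exact hP0 ▸ interior_subset hx
    rcases eq_or_lt_of_le hi with rfl | him
    · exact hPm ▸ interior_subset hy
    · exact σ.boundary_subset_table (hPbd i hi0 (by omega))
  refine ⟨hne, ⟨m, P, hP0, hPm, hne, hPbd, fun i hi => ?_, fun i hi1 him => ?_⟩, rfl,
    fun _ _ => rfl⟩
  · exact σ.convex_table.segment_subset (htable i (by omega)) (htable (i + 1) (by omega))
  · obtain ⟨s, hs⟩ := hPbd i hi1 him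
    refine ⟨s, hs, hs ▸ unitDir_eq_reflectAcross_of_isLocalMax
      ((σ.differentiable (by omega)).differentiableAt.hasDerivAt) (σ.deriv_ne_zero s) ?_ ?_⟩
    · exact ((hvertex i hi1 him).comp_mapsTo (t := univ) (fun t _ => ⟨t, rfl⟩) hs).isLocalMax
        Filter.univ_mem
    · exact hs ▸ hstrict i hi1 him

end
end

section
/- Let σ : S¹ → ℝ² be a C¹ constant-speed parametrization of a simple closed curve bounding a compact region M, let A, B ∈ M, and suppose Z = σ(s₀) maximizes the function Z' ↦ |AZ'| + |Z'B| over all points Z' on the curve, with A ≠ Z and B ≠ Z. Then ⟨(Z − A)/|Z − A| + (Z − B)/|Z − B|, σ'(s₀)⟩ = 0; equivalently, the segments AZ and ZB make equal angles with the tangent line to σ at Z, so that the path A Z B satisfies the billiard reflection law at Z. -/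
noncomputable section

open Set

/-! A maximizer `s₀` of `s ↦ |Aσ(s)| + |σ(s)B|` is a critical point. Since `σ s₀ ≠ A, B`, both
distances are differentiable there, and the derivative of `s ↦ ‖σ s - P‖` is the inner product
of the unit vector from `P` to `σ s` with `σ' s` (differentiate `‖σ s - P‖ ^ 2` and take the
square root). -/

section InnerProductSpace

open scoped InnerProductSpace

variable {F : Type*} [NormedAddCommGroup F] [InnerProductSpace ℝ F]
  {f : ℝ → F} {f' : F} {x : ℝ}

theorem HasDerivAt.norm (hf : HasDerivAt f f' x) (h0 : f x ≠ 0) :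
    HasDerivAt (fun s => ‖f s‖) ⟪‖f x‖⁻¹ • f x, f'⟫_ℝ x := by
  have hsqrt := hf.norm_sq.sqrt (pow_ne_zero 2 (norm_ne_zero_iff.2 h0))
  simp only [Real.sqrt_sq (norm_nonneg _)] at hsqrt
  convert hsqrt using 1
  rw [real_inner_smul_left]
  field_simp

theorem HasDerivAt.norm_sub_const (hf : HasDerivAt f f' x) {p : F} (hp : f x ≠ p) :
    HasDerivAt (fun s => ‖f s - p‖) ⟪‖f x - p‖⁻¹ • (f x - p), f'⟫_ℝ x :=
  (hf.sub_const p).norm (sub_ne_zero.2 hp)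

theorem IsLocalExtr.inner_unit_add_unit_eq_zero {A B : F}
    (hext : IsLocalExtr (fun s => ‖f s - A‖ + ‖f s - B‖) x) (hf : HasDerivAt f f' x)
    (hA : f x ≠ A) (hB : f x ≠ B) :
    ⟪‖f x - A‖⁻¹ • (f x - A) + ‖f x - B‖⁻¹ • (f x - B), f'⟫_ℝ = 0 := by
  rw [inner_add_left]
  exact hext.hasDerivAt_eq_zero ((hf.norm_sub_const hA).add (hf.norm_sub_const hB))

end InnerProductSpace

theorem maximizer_reflects_general
    (σ : ℝ → Pt) (hσ : ContDiff ℝ 1 σ)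
    (A B : Pt) (s₀ : ℝ)
    (hmax : ∀ s : ℝ, dist A (σ s) + dist (σ s) B ≤ dist A (σ s₀) + dist (σ s₀) B)
    (hAZ : A ≠ σ s₀) (hBZ : B ≠ σ s₀) :
    (inner ℝ (‖σ s₀ - A‖⁻¹ • (σ s₀ - A) + ‖σ s₀ - B‖⁻¹ • (σ s₀ - B)) (deriv σ s₀) : ℝ) = 0 := by
  have hext : IsLocalExtr (fun s => ‖σ s - A‖ + ‖σ s - B‖) s₀ :=
    Or.inr <| Filter.Eventually.of_forall fun s => by
      simpa only [dist_eq_norm, norm_sub_rev A] using hmax s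
  exact hext.inner_unit_add_unit_eq_zero (hσ.differentiable one_ne_zero s₀).hasDerivAt
    hAZ.symm hBZ.symm

/-- If `Z = σ s₀` maximizes `Z' ↦ |AZ'| + |Z'B|` over a `C¹`
constant-speed simple closed curve bounding a compact region `M` containing `A` and `B`,
and `A ≠ Z ≠ B`, then `⟨(Z−A)/|Z−A| + (Z−B)/|Z−B|, σ'(s₀)⟩ = 0`, i.e. the path `A Z B`
satisfies the billiard reflection law at `Z`. -/
theorem maximizer_reflects
    (σ : ℝ → Pt) (hσ : ContDiff ℝ 1 σ) (hper : Function.Periodic σ 1)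
    (hinj : ∀ ⦃s t : ℝ⦄, s ∈ Set.Ico (0:ℝ) 1 → t ∈ Set.Ico (0:ℝ) 1 → σ s = σ t → s = t)
    (c : ℝ) (hc : 0 < c) (hspeed : ∀ s : ℝ, ‖deriv σ s‖ = c)
    (M : Set Pt) (hM : IsCompact M) (hbd : frontier M = Set.range σ)
    (A B : Pt) (hA : A ∈ M) (hB : B ∈ M) (s₀ : ℝ)
    (hmax : ∀ s : ℝ, dist A (σ s) + dist (σ s) B ≤ dist A (σ s₀) + dist (σ s₀) B)
    (hAZ : A ≠ σ s₀) (hBZ : B ≠ σ s₀) :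
    (inner ℝ (‖σ s₀ - A‖⁻¹ • (σ s₀ - A) + ‖σ s₀ - B‖⁻¹ • (σ s₀ - B)) (deriv σ s₀) : ℝ) = 0 :=
  maximizer_reflects_general σ hσ A B s₀ hmax hAZ hBZ

end
end

section
/- Suppose ℓ(u), u ∈ I, is a non-degenerate C¹ family of lines parametrized by ℓ(u,t) = ξ(u) + t v(u), t ∈ ℝ. For (u₀,t₀) ∈ I × ℝ, the derivative Dℓ(u₀,t₀) — the linear map ℝ² → ℝ² given by the matrix with columns ξ'(u₀) + t₀ v'(u₀) and v(u₀) — is invertible if and only if ℓ(u₀,t₀) is not a focusing point at u = u₀ (that is, if and only if it is not the case that v'(u₀) ≠ 0 and t₀ = −⟨ξ'(u₀), v'(u₀)⟩/⟨v'(u₀), v'(u₀)⟩). -/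
noncomputable section

open Set

/-! Write `a × b` for `cross a b`. Since `‖v‖ = 1`, `v'` is orthogonal to `v`, so in the
orthonormal frame `(v, rot90 v)` the vector `v'` is `-(v' × v) • rot90 v`. Hence
`⟪ξ', v'⟫ = (ξ' × v)(v' × v)` and `⟪v', v'⟫ = (v' × v)²`, while
`det Dℓ(u₀, t₀) = ξ' × v + t₀ (v' × v)`. If `v' ≠ 0` this vanishes exactly at the focusing
parameter `t₀ = -(ξ' × v)/(v' × v)`; if `v' = 0` it equals `ξ' × v`, which non-degeneracy
keeps away from zero. -/

theorem inner_deriv_eq_zero_of_norm_eq_one {E : Type*} [NormedAddCommGroup E]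
    [InnerProductSpace ℝ E] {f : ℝ → E} {x : ℝ} (hf : DifferentiableAt ℝ f x)
    (hnorm : ∀ t, ‖f t‖ = 1) : inner ℝ (f x) (deriv f x) = 0 := by
  have hconst : HasDerivAt (‖f ·‖ ^ 2) 0 x := by
    simpa [hnorm] using hasDerivAt_const x (1 : ℝ)
  simpa using hf.hasDerivAt.norm_sq.unique hconst

def cross (a b : Pt) : ℝ := a 0 * b 1 - a 1 * b 0

theorem cross_add_smul_left (a w b : Pt) (t : ℝ) :
    cross (a + t • w) b = cross a b + t * cross w b := by
  simp only [cross, PiLp.add_apply, PiLp.smul_apply, smul_eq_mul]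
  ring

theorem inner_rot90 (a v : Pt) : inner ℝ a (rot90 v) = -cross a v := by
  simp only [rot90, cross, WithLp.equiv_symm_apply, PiLp.inner_apply, RCLike.inner_apply,
    Real.ringHom_apply, Fin.sum_univ_two, Matrix.cons_val_zero, Matrix.cons_val_one,
    Matrix.cons_val_fin_one]
  ring

theorem eq_inner_smul_sub_cross_smul_rot90 {v : Pt} (hv : ‖v‖ = 1) (a : Pt) :
    a = inner ℝ a v • v - cross a v • rot90 v := by
  have h := EuclideanSpace.norm_sq_eq v
  simp only [hv, one_pow, Fin.sum_univ_two, Real.norm_eq_abs, sq_abs] at h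
  ext i
  fin_cases i <;>
  · simp only [Fin.zero_eta, Fin.mk_one, rot90, cross, WithLp.equiv_symm_apply,
      PiLp.inner_apply, RCLike.inner_apply, Real.ringHom_apply, Fin.sum_univ_two,
      PiLp.sub_apply, PiLp.smul_apply, smul_eq_mul, Matrix.cons_val_zero, Matrix.cons_val_one,
      Matrix.cons_val_fin_one]
    linear_combination (a _) * h

theorem cross_eq_zero_iff_eq_inner_smul {v : Pt} (hv : ‖v‖ = 1) {a : Pt} :
    cross a v = 0 ↔ a = inner ℝ a v • v := by
  constructor
  · intro h
    simpa [h] using eq_inner_smul_sub_cross_smul_rot90 hv a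
  · intro h
    rw [h]
    simp only [cross, PiLp.smul_apply, smul_eq_mul]
    ring

theorem inner_eq_cross_mul_cross_of_inner_eq_zero {v w : Pt} (hv : ‖v‖ = 1)
    (hwv : inner ℝ w v = 0) (a : Pt) : inner ℝ a w = cross a v * cross w v := by
  conv_lhs => rw [eq_inner_smul_sub_cross_smul_rot90 hv w]
  rw [hwv, zero_smul, zero_sub, inner_neg_right, inner_smul_right, inner_rot90]
  ring

theorem cross_add_smul_eq_zero_iff {v w : Pt} (hv : ‖v‖ = 1) (hwv : inner ℝ w v = 0)
    (hw : w ≠ 0) (a : Pt) (t : ℝ) :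
    cross (a + t • w) v = 0 ↔ t = -(inner ℝ a w / inner ℝ w w) := by
  have hc : cross w v ≠ 0 := by
    have hww := (inner_self_ne_zero (𝕜 := ℝ)).2 hw
    rw [inner_eq_cross_mul_cross_of_inner_eq_zero hv hwv] at hww
    exact left_ne_zero_of_mul hww
  rw [cross_add_smul_left, inner_eq_cross_mul_cross_of_inner_eq_zero hv hwv,
    inner_eq_cross_mul_cross_of_inner_eq_zero hv hwv, mul_div_mul_right _ _ hc]
  constructor <;> intro h
  · field_simp; linarith
  · rw [h]; field_simp; ring

namespace LineFamily

variable {k : ℕ}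

theorem inner_deriv_dir_self (F : LineFamily k) (hk : k ≠ 0) (u : ℝ) :
    inner ℝ (deriv F.dir u) (F.dir u) = 0 := by
  rw [real_inner_comm]
  exact inner_deriv_eq_zero_of_norm_eq_one
    ((F.smooth_dir.differentiable (by exact_mod_cast hk)).differentiableAt) F.unit_dir

theorem Nondegenerate.cross_ne_zero {F : LineFamily k} (hF : F.Nondegenerate) {u : ℝ}
    (hu : u ∈ F.I) (hdir : deriv F.dir u = 0) : cross (deriv F.base u) (F.dir u) ≠ 0 :=
  fun h => hF u hu hdir _ ((cross_eq_zero_iff_eq_inner_smul (F.unit_dir u)).1 h)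

end LineFamily

/-- For a non-degenerate `C¹` family of lines `ℓ(u,t) = ξ(u) + t v(u)`,
the derivative `Dℓ(u₀,t₀)` (the matrix with columns `ξ'(u₀) + t₀ v'(u₀)` and `v(u₀)`) is
invertible iff `ℓ(u₀,t₀)` is not a focusing point at `u = u₀`. -/
theorem invertible_iff_not_focusing
    (F : LineFamily 1) (hnd : F.Nondegenerate) (u₀ : ℝ) (hu₀ : u₀ ∈ F.I) (t₀ : ℝ) :
    IsUnit (!![(deriv F.base u₀ + t₀ • deriv F.dir u₀) 0, F.dir u₀ 0;
               (deriv F.base u₀ + t₀ • deriv F.dir u₀) 1, F.dir u₀ 1]) ↔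
    ¬ (deriv F.dir u₀ ≠ 0 ∧
        t₀ = -((inner ℝ (deriv F.base u₀) (deriv F.dir u₀) : ℝ) /
          (inner ℝ (deriv F.dir u₀) (deriv F.dir u₀) : ℝ))) := by
  have hdet : Matrix.det !![(deriv F.base u₀ + t₀ • deriv F.dir u₀) 0, F.dir u₀ 0;
      (deriv F.base u₀ + t₀ • deriv F.dir u₀) 1, F.dir u₀ 1] =
      cross (deriv F.base u₀ + t₀ • deriv F.dir u₀) (F.dir u₀) := by
    rw [Matrix.det_fin_two_of, cross, mul_comm (F.dir u₀ 0)]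
  rw [Matrix.isUnit_iff_isUnit_det, isUnit_iff_ne_zero, hdet, not_and]
  by_cases hw : deriv F.dir u₀ = 0
  · simpa [hw] using hnd.cross_ne_zero hu₀ hw
  · rw [Ne, cross_add_smul_eq_zero_iff (F.unit_dir u₀)
      (F.inner_deriv_dir_self one_ne_zero u₀) hw]
    simp [hw]

end
end

section
/- Let K be the closed ball of radius ε₀ > 0 about a point x₀ in ℝ². Suppose f : K → ℝ² is C¹ and Df(x₀) is invertible, and let y₀ = f(x₀). Then there exist η, δ > 0 and 0 < ε < ε₀ such that for any C¹ function g : K → ℝ² with dist_{C¹(K,ℝ²)}(f,g) < η, the map g is one-to-one on the open ball B_ε(x₀) and the open ball B_δ(y₀) is contained in g(B_ε(x₀)). -/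
noncomputable section

open Set

/-!
The derivative of `f` stays within `‖A⁻¹‖⁻¹ / 4` of `A = Df(x₀)` on a small ball `B_ε(x₀)`, so
the derivative of any `g` that is `C¹`-close to `f` stays within `‖A⁻¹‖⁻¹ / 2` of `A` there. By
the mean value inequality `g` then approximates the invertible map `A` on `B_ε(x₀)` with a
constant below `‖A⁻¹‖⁻¹`, which makes `g` injective there and forces its image to contain a ball
about `g x₀` whose radius does not depend on `g`; since `g x₀` is close to `f x₀`, a smaller ball
about `f x₀` is covered as well.
-/

open Metric Filter Topology NNReal

theorem IsCompact.le_ciSup_of_continuousOn {X α : Type*} [TopologicalSpace X]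
    [ConditionallyCompleteLinearOrder α] [TopologicalSpace α] [ClosedIciTopology α]
    {K : Set X} (hK : IsCompact K) {φ : X → α} (hφ : ContinuousOn φ K) {z : X} (hz : z ∈ K) :
    φ z ≤ ⨆ s : K, φ s :=
  haveI : Nonempty α := ⟨φ z⟩
  le_ciSup (by simpa only [← range_domRestrict] using hK.bddAbove_image hφ) (⟨z, hz⟩ : K)

theorem exists_pos_lt_forall_mem_ball {X : Type*} [PseudoMetricSpace X] {x : X} {p : X → Prop}
    (hp : ∀ᶠ z in 𝓝 x, p z) {ε₀ : ℝ} (hε₀ : 0 < ε₀) :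
    ∃ ε, 0 < ε ∧ ε < ε₀ ∧ ∀ z ∈ ball x ε, p z := by
  obtain ⟨ε, hε, hball⟩ := eventually_nhds_iff_ball.1 hp
  refine ⟨min ε (ε₀ / 2), by positivity, (min_le_right _ _).trans_lt (half_lt_self hε₀), ?_⟩
  exact fun z hz => hball z (ball_subset_ball (min_le_left _ _) hz)

section Derivatives

variable {E F : Type*} [NormedAddCommGroup E] [NormedSpace ℝ E]
  [NormedAddCommGroup F] [NormedSpace ℝ F]

theorem uniqueDiffOn_closedBall (x : E) {r : ℝ} (hr : 0 < r) :
    UniqueDiffOn ℝ (closedBall x r) :=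
  uniqueDiffOn_convex (convex_closedBall x r)
    ⟨x, mem_interior_iff_mem_nhds.2 (closedBall_mem_nhds x hr)⟩

theorem ContDiffOn.hasFDerivAt_fderivWithin {g : E → F} {s : Set E} {z : E}
    (hg : ContDiffOn ℝ 1 g s) (hs : s ∈ 𝓝 z) : HasFDerivAt g (fderivWithin ℝ g s z) z :=
  (hg.differentiableOn one_ne_zero z (mem_of_mem_nhds hs)).hasFDerivWithinAt.hasFDerivAt hs

theorem ContDiffOn.exists_ball_norm_fderivWithin_sub_lt {f : E → F} {s : Set E} {x : E}
    (hf : ContDiffOn ℝ 1 f s) (hs : UniqueDiffOn ℝ s) (hx : s ∈ 𝓝 x) {ε₀ ρ : ℝ}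
    (hε₀ : 0 < ε₀) (hρ : 0 < ρ) :
    ∃ ε, 0 < ε ∧ ε < ε₀ ∧ ∀ z ∈ ball x ε, ‖fderivWithin ℝ f s z - fderiv ℝ f x‖ < ρ := by
  have hcont : ContinuousAt (fderivWithin ℝ f s) x :=
    (hf.continuousOn_fderivWithin hs le_rfl x (mem_of_mem_nhds hx)).continuousAt hx
  rw [ContinuousAt, fderivWithin_of_mem_nhds hx] at hcont
  simpa only [mem_ball, dist_eq_norm] using
    exists_pos_lt_forall_mem_ball (hcont.eventually (ball_mem_nhds _ hρ)) hε₀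

theorem Convex.approximatesLinearOn_of_norm_sub_le {s : Set E} (hs : Convex ℝ s)
    {g : E → F} {g' : E → E →L[ℝ] F} {A : E →L[ℝ] F} {c : ℝ≥0}
    (hg : ∀ z ∈ s, HasFDerivWithinAt g (g' z) s z) (hg' : ∀ z ∈ s, ‖g' z - A‖ ≤ c) :
    ApproximatesLinearOn g A s c :=
  fun _ hx _ hy => hs.norm_image_sub_le_of_norm_hasFDerivWithin_le' hg hg' hy hx

theorem injOn_ball_and_closedBall_subset_image_of_norm_fderiv_sub_le [CompleteSpace E]
    (A : E ≃L[ℝ] F) {g : E → F} {g' : E → E →L[ℝ] F} {x : E} {ε ρ : ℝ} {c : ℝ≥0}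
    (hc : c < ‖(A.symm : F →L[ℝ] E)‖₊⁻¹) (hρ : 0 ≤ ρ) (hρε : ρ < ε)
    (hg : ∀ z ∈ ball x ε, HasFDerivAt g (g' z) z) (hg' : ∀ z ∈ ball x ε, ‖g' z - A‖ ≤ c) :
    InjOn g (ball x ε) ∧
      closedBall (g x) ((‖(A.symm : F →L[ℝ] E)‖₊⁻¹ - c : ℝ) * ρ) ⊆ g '' ball x ε := by
  have hA : ApproximatesLinearOn g (A : E →L[ℝ] F) (ball x ε) c :=
    (convex_ball x ε).approximatesLinearOn_of_norm_sub_le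
      (fun z hz => (hg z hz).hasFDerivWithinAt) hg'
  refine ⟨hA.injOn (Or.inr hc), ?_⟩
  rw [NNReal.coe_inv]
  exact (hA.surjOn_closedBall_of_nonlinearRightInverse A.toNonlinearRightInverse hρ
    (closedBall_subset_ball hρε)).mono (closedBall_subset_ball hρε) Subset.rfl

end Derivatives

section c1DistOn

variable {K : Set Pt} {f g : Pt → Pt} {z : Pt}

theorem norm_sub_le_c1DistOn (hK : IsCompact K) (hf : ContinuousOn f K)
    (hg : ContinuousOn g K) (hz : z ∈ K) : ‖f z - g z‖ ≤ c1DistOn K f g :=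
  (hK.le_ciSup_of_continuousOn (hf.sub hg).norm hz).trans (le_max_left _ _)

theorem norm_fderivWithin_sub_le_c1DistOn (hK : IsCompact K) (hK' : UniqueDiffOn ℝ K)
    (hf : ContDiffOn ℝ 1 f K) (hg : ContDiffOn ℝ 1 g K) (hz : z ∈ K) :
    ‖fderivWithin ℝ f K z - fderivWithin ℝ g K z‖ ≤ c1DistOn K f g :=
  (hK.le_ciSup_of_continuousOn ((hf.continuousOn_fderivWithin hK' le_rfl).sub
    (hg.continuousOn_fderivWithin hK' le_rfl)).norm hz).trans (le_max_right _ _)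

end c1DistOn

/-- perturbed inverse function theorem. If `f` is `C¹` on the closed
ball `K` of radius `ε₀` about `x₀` and `Df(x₀)` is invertible, then there are
`η, δ > 0` and `0 < ε < ε₀` such that every `C¹` map `g` with `dist_{C¹(K)}(f,g) < η` is
one-to-one on `B_ε(x₀)` and satisfies `B_δ(f x₀) ⊆ g(B_ε(x₀))`. -/
theorem perturbed_inverse_function
    (x₀ : Pt) (ε₀ : ℝ) (hε₀ : 0 < ε₀) (f : Pt → Pt)
    (hf : ContDiffOn ℝ 1 f (Metric.closedBall x₀ ε₀))
    (hDf : ∃ e : Pt ≃L[ℝ] Pt, (e : Pt →L[ℝ] Pt) = fderiv ℝ f x₀) :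
    ∃ η > (0:ℝ), ∃ δ > (0:ℝ), ∃ ε : ℝ, 0 < ε ∧ ε < ε₀ ∧
      ∀ g : Pt → Pt, ContDiffOn ℝ 1 g (Metric.closedBall x₀ ε₀) →
        c1DistOn (Metric.closedBall x₀ ε₀) f g < η →
        Set.InjOn g (Metric.ball x₀ ε) ∧
        Metric.ball (f x₀) δ ⊆ g '' Metric.ball x₀ ε := by
  obtain ⟨A, hA⟩ := hDf
  set K := closedBall x₀ ε₀
  set r : ℝ≥0 := ‖(A.symm : Pt →L[ℝ] Pt)‖₊⁻¹
  have hr : 0 < r := inv_pos.2 A.nnnorm_symm_pos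
  have hK : UniqueDiffOn ℝ K := uniqueDiffOn_closedBall x₀ hε₀
  have hKx₀ : K ∈ 𝓝 x₀ := closedBall_mem_nhds x₀ hε₀
  obtain ⟨ε, hε, hεε₀, hfA⟩ :=
    hf.exists_ball_norm_fderivWithin_sub_lt hK hKx₀ hε₀ (by positivity : (0 : ℝ) < r / 4)
  rw [← hA] at hfA
  -- `η ≤ r / 4` puts `Dg` within `r / 2` of `A`; then `g` covers the ball of radius
  -- `(r - r / 2) * (ε / 2) = r ε / 4` about `g x₀`, which contains `B_{rε/8}(f x₀)`
  -- because `η ≤ r ε / 8`.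
  refine ⟨min (r / 4) (r * ε / 8), by positivity, r * ε / 8, by positivity, ε, hε, hεε₀,
    fun g hg hfg => ?_⟩
  have hKz : ∀ z ∈ ball x₀ ε, K ∈ 𝓝 z := fun z hz =>
    closedBall_mem_nhds_of_mem (ball_subset_ball hεε₀.le hz)
  have hgA : ∀ z ∈ ball x₀ ε, ‖fderivWithin ℝ g K z - A‖ ≤ ((r / 2 : ℝ≥0) : ℝ) := fun z hz => by
    have hfg' := norm_fderivWithin_sub_le_c1DistOn (isCompact_closedBall x₀ ε₀) hK hf hg
      (mem_of_mem_nhds (hKz z hz))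
    rw [norm_sub_rev] at hfg'
    push_cast
    linarith [norm_sub_le_norm_sub_add_norm_sub (fderivWithin ℝ g K z) (fderivWithin ℝ f K z) A,
      hfA z hz, min_le_left (r / 4 : ℝ) (r * ε / 8)]
  obtain ⟨hinj, hcover⟩ := injOn_ball_and_closedBall_subset_image_of_norm_fderiv_sub_le A
    (half_lt_self hr.ne') (by positivity) (half_lt_self hε)
    (fun z hz => hg.hasFDerivAt_fderivWithin (hKz z hz)) hgA
  refine ⟨hinj, ball_subset_closedBall.trans ((closedBall_subset_closedBall' ?_).trans hcover)⟩
  have hfg₀ : dist (f x₀) (g x₀) ≤ c1DistOn K f g := by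
    simpa only [dist_eq_norm] using norm_sub_le_c1DistOn (isCompact_closedBall x₀ ε₀)
      hf.continuousOn hg.continuousOn (mem_of_mem_nhds hKx₀)
  rw [show ‖(A.symm : Pt →L[ℝ] Pt)‖₊⁻¹ = r from rfl, NNReal.coe_div, NNReal.coe_ofNat]
  linarith [min_le_right (r / 4 : ℝ) (r * ε / 8)]

end
end
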